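/- arXiv:2205.08951 — 3 statements merged into one kernel-verified Lean document; each statement's English description precedes it below -/
import Mathlib

section
/- Assume K_M is positive semidefinite and F₀ ∈ ℝ^{n×n} is symmetric positive semidefinite. Then the unique solution F : [0,T] → ℝ^{n×n} of F'(t) = L[F(t)], F(0) = F₀, is symmetric positive semidefinite for every t ∈ [0,T]. -/
open Matrix MeasureTheory Filter
open scoped Kronecker Topology

/-- Column-stacking vectorization of a matrix: `vecM X (j, i) = X i j`. -/
def vecM {a b : Type*} (X : Matrix a b ℝ) : b × a → ℝ := fun p => X p.2 p.1

/-- Inverse of column-stacking vectorization. -/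
def unvecM {a b : Type*} (v : b × a → ℝ) : Matrix a b ℝ := Matrix.of fun i j => v (j, i)

/-- (Mixed) Lyapunov-type operator `X ↦ A₁ X + X A₂ᵀ + ∑ᵢⱼ kᵢⱼ • N₁ᵢ X N₂ⱼᵀ`. -/
def lyapM {a b : Type*} [Fintype a] [Fintype b] {q : ℕ}
    (A₁ : Matrix a a ℝ) (A₂ : Matrix b b ℝ)
    (N₁ : Fin q → Matrix a a ℝ) (N₂ : Fin q → Matrix b b ℝ)
    (K : Matrix (Fin q) (Fin q) ℝ) (X : Matrix a b ℝ) : Matrix a b ℝ :=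
  A₁ * X + X * A₂ᵀ + ∑ i, ∑ j, K i j • (N₁ i * X * (N₂ j)ᵀ)

/-- Frobenius adjoint of `lyapM`: `X ↦ A₁ᵀ X + X A₂ + ∑ᵢⱼ kᵢⱼ • N₁ᵢᵀ X N₂ⱼ`. -/
def lyapAdjM {a b : Type*} [Fintype a] [Fintype b] {q : ℕ}
    (A₁ : Matrix a a ℝ) (A₂ : Matrix b b ℝ)
    (N₁ : Fin q → Matrix a a ℝ) (N₂ : Fin q → Matrix b b ℝ)
    (K : Matrix (Fin q) (Fin q) ℝ) (X : Matrix a b ℝ) : Matrix a b ℝ :=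
  A₁ᵀ * X + X * A₂ + ∑ i, ∑ j, K i j • ((N₁ i)ᵀ * X * N₂ j)

/-- Kronecker matrix `𝒦 = I ⊗ A₁ + A₂ ⊗ I + ∑ᵢⱼ kᵢⱼ • (N₂ᵢ ⊗ N₁ⱼ)` associated to `lyapM`. -/
noncomputable def kronM {a b : Type*} [Fintype a] [Fintype b] [DecidableEq a] [DecidableEq b] {q : ℕ}
    (A₁ : Matrix a a ℝ) (A₂ : Matrix b b ℝ)
    (N₁ : Fin q → Matrix a a ℝ) (N₂ : Fin q → Matrix b b ℝ)
    (K : Matrix (Fin q) (Fin q) ℝ) : Matrix (b × a) (b × a) ℝ :=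
  (1 : Matrix b b ℝ) ⊗ₖ A₁ + A₂ ⊗ₖ (1 : Matrix a a ℝ) + ∑ i, ∑ j, K i j • (N₂ i ⊗ₖ N₁ j)

/-- `F` solves the matrix ODE `F' = L (F t)` at every `t ∈ [0,T]` (entrywise). -/
def solvesODE {a b : Type*} (L : Matrix a b ℝ → Matrix a b ℝ)
    (F : ℝ → Matrix a b ℝ) (T : ℝ) : Prop :=
  ∀ t ∈ Set.Icc (0:ℝ) T, ∀ i j, HasDerivAt (fun s => F s i j) (L (F t) i j) t

/-- Entrywise integral `∫₀ᵀ F(t) dt`. -/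
noncomputable def intM {a b : Type*} (F : ℝ → Matrix a b ℝ) (T : ℝ) : Matrix a b ℝ :=
  Matrix.of fun i j => ∫ t in (0:ℝ)..T, F t i j

/-- Explicit solution of a vectorized linear matrix ODE via the matrix exponential. -/
noncomputable def expSolM {a b : Type*} [Fintype a] [Fintype b] [DecidableEq a] [DecidableEq b]
    (Kmat : Matrix (b × a) (b × a) ℝ) (F₀ : Matrix a b ℝ) (t : ℝ) : Matrix a b ℝ :=
  unvecM (NormedSpace.exp (t • Kmat) *ᵥ vecM F₀)

/-!
Symmetry of `F` comes from uniqueness for the linear ODE: when `K` is symmetric, `L` commutes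
with transposition, so `F - Fᵀ` solves `D' = L D` with `D 0 = 0`.

For positivity, perturb to `G t = F t + ε e^{ct} I`, where `c` dominates the quadratic form of
`L I`. If `G` ever stops being positive definite, compactness of the unit sphere gives a first
time `t₀ > 0` and a unit vector `x` with `G t₀ ⪰ 0` and `G t₀ x = 0`. There
`xᵀ L(G t₀) x = ∑ kᵢⱼ (Nᵢᵀx)ᵀ (G t₀) (Nⱼᵀx) ≥ 0` by the Schur product theorem, and the choice of
`c` makes `d/dt xᵀ G x > 0` at `t₀`, although `xᵀ G x` decreases to `0` there. Letting `ε → 0`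
gives `F t ⪰ 0`.
-/

open Set

lemma HasDerivWithinAt.nonpos_of_le_left {f : ℝ → ℝ} {a d : ℝ}
    (hf : HasDerivWithinAt f d (Iio a) a) (hle : ∀ᶠ s in 𝓝[<] a, f a ≤ f s) : d ≤ 0 := by
  refine le_of_tendsto ((hasDerivWithinAt_iff_tendsto_slope' (self_notMem_Iio (a := a))).1 hf) ?_
  filter_upwards [hle, self_mem_nhdsWithin] with s hs (hsa : s < a)
  rw [slope_def_field]
  exact div_nonpos_of_nonneg_of_nonpos (sub_nonneg.2 hs) (sub_nonpos.2 hsa.le)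

lemma eqOn_zero_of_hasDerivAt_linear {E : Type*} [NormedAddCommGroup E] [NormedSpace ℝ E]
    (L : E →L[ℝ] E) {D : ℝ → E} {T : ℝ} (hD : ∀ t ∈ Icc 0 T, HasDerivAt D (L (D t)) t)
    (hD₀ : D 0 = 0) : EqOn D 0 (Icc 0 T) :=
  ODE_solution_unique (v := fun _ => L) (fun _ => L.lipschitz) (HasDerivAt.continuousOn hD)
    (fun t ht => (hD t (Ico_subset_Icc_self ht)).hasDerivWithinAt) continuousOn_const
    (fun t _ => by rw [Pi.zero_apply, map_zero]; exact hasDerivWithinAt_const _ _ _) hD₀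

namespace Matrix

variable {ι κ : Type*} [Fintype ι] [Fintype κ]

lemma PosSemidef.sum_mul_dotProduct_mulVec_nonneg {K : Matrix κ κ ℝ} (hK : K.PosSemidef)
    {G : Matrix ι ι ℝ} (hG : G.PosSemidef) (y : κ → ι → ℝ) :
    0 ≤ ∑ i, ∑ j, K i j * (y i ⬝ᵥ G *ᵥ y j) := by
  have hGram : (of y * G * (of y)ᴴ).PosSemidef := hG.mul_mul_conjTranspose_same _
  have hGram_apply : ∀ i j, (of y * G * (of y)ᴴ) i j = y i ⬝ᵥ G *ᵥ y j := fun i j => by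
    simp only [mul_apply, dotProduct, mulVec, Finset.mul_sum, Finset.sum_mul]
    rw [Finset.sum_comm]
    simp [mul_comm, mul_left_comm]
  simp_rw [← hGram_apply]
  simpa [dotProduct, mulVec] using (hK.hadamard hGram).dotProduct_mulVec_nonneg (fun _ => 1)

lemma dotProduct_mulVec_le_sum_abs_mul (M : Matrix ι ι ℝ) (x : ι → ℝ) :
    x ⬝ᵥ M *ᵥ x ≤ (∑ i, ∑ j, |M i j|) * (x ⬝ᵥ x) := by
  have hsq : ∀ i, x i * x i ≤ x ⬝ᵥ x := fun i =>
    Finset.single_le_sum (f := fun j => x j * x j) (fun j _ => mul_self_nonneg (x j))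
      (Finset.mem_univ i)
  have hprod : ∀ i j, |x i * x j| ≤ x ⬝ᵥ x := fun i j => by
    rw [abs_mul]
    nlinarith [abs_mul_abs_self (x i), abs_mul_abs_self (x j), hsq i, hsq j,
      sq_nonneg (|x i| - |x j|)]
  calc x ⬝ᵥ M *ᵥ x = ∑ i, ∑ j, M i j * (x i * x j) := by
        simp only [dotProduct, mulVec, Finset.mul_sum]
        exact Finset.sum_congr rfl fun i _ => Finset.sum_congr rfl fun j _ => by ring
    _ ≤ ∑ i, ∑ j, |M i j| * (x ⬝ᵥ x) := by
        refine Finset.sum_le_sum fun i _ => Finset.sum_le_sum fun j _ => ?_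
        calc M i j * (x i * x j) ≤ |M i j * (x i * x j)| := le_abs_self _
          _ ≤ |M i j| * (x ⬝ᵥ x) := by rw [abs_mul]; gcongr; exact hprod i j
    _ = (∑ i, ∑ j, |M i j|) * (x ⬝ᵥ x) := by simp only [Finset.sum_mul]

lemma exists_dotProduct_mulVec_lt_mul_dotProduct (M : Matrix ι ι ℝ) :
    ∃ c, ∀ x ≠ 0, x ⬝ᵥ M *ᵥ x < c * (x ⬝ᵥ x) := by
  refine ⟨∑ i, ∑ j, |M i j| + 1, fun x hx => ?_⟩
  have hpos : 0 < x ⬝ᵥ x := by simpa using dotProduct_self_star_pos_iff.2 hx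
  linarith [dotProduct_mulVec_le_sum_abs_mul M x]

lemma posSemidef_of_forall_posDef_add_smul_one [DecidableEq ι] {M : Matrix ι ι ℝ}
    (hM : M.IsHermitian) (h : ∀ δ : ℝ, 0 < δ → (M + δ • 1).PosDef) : M.PosSemidef := by
  refine .of_dotProduct_mulVec_nonneg hM fun x => ?_
  have hlim : Filter.Tendsto (fun δ : ℝ => x ⬝ᵥ M *ᵥ x + δ * (x ⬝ᵥ x)) (𝓝[>] 0)
      (𝓝 (x ⬝ᵥ M *ᵥ x)) := by
    refine tendsto_nhdsWithin_of_tendsto_nhds ?_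
    simpa using ((continuous_id.mul continuous_const).const_add (x ⬝ᵥ M *ᵥ x)).tendsto 0
  refine ge_of_tendsto hlim (eventually_nhdsWithin_of_forall fun δ (hδ : 0 < δ) => ?_)
  simpa [add_mulVec, smul_mulVec] using ((h δ hδ).posSemidef.dotProduct_mulVec_nonneg x)

lemma hasDerivAt_dotProduct_mulVec {M : ℝ → Matrix ι ι ℝ} {M' : Matrix ι ι ℝ} {t : ℝ}
    (hM : ∀ i j, HasDerivAt (fun s => M s i j) (M' i j) t) (x : ι → ℝ) :
    HasDerivAt (fun s => x ⬝ᵥ M s *ᵥ x) (x ⬝ᵥ M' *ᵥ x) t := by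
  simp only [dotProduct, mulVec]
  exact HasDerivAt.fun_sum fun i _ =>
    (HasDerivAt.fun_sum fun j _ => (hM i j).mul_const _).const_mul _

lemma continuous_dotProduct_mulVec :
    Continuous fun p : Matrix ι ι ℝ × (ι → ℝ) => p.2 ⬝ᵥ p.1 *ᵥ p.2 :=
  continuous_snd.dotProduct (continuous_fst.matrix_mulVec continuous_snd)

lemma exists_mem_sphere_dotProduct_mulVec_nonpos {M : Matrix ι ι ℝ} (hM : M.IsHermitian)
    (h : ¬M.PosDef) : ∃ x ∈ Metric.sphere (0 : ι → ℝ) 1, x ⬝ᵥ M *ᵥ x ≤ 0 := by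
  obtain ⟨x, hx, hMx⟩ : ∃ x, x ≠ 0 ∧ x ⬝ᵥ M *ᵥ x ≤ 0 := by
    simpa [posDef_iff_dotProduct_mulVec, isHermitian_iff_isSymm.1 hM] using h
  refine ⟨‖x‖⁻¹ • x, by simpa using norm_smul_inv_norm (𝕜 := ℝ) hx, ?_⟩
  simpa [mulVec_smul, ← mul_assoc] using
    mul_nonpos_of_nonneg_of_nonpos (by positivity : 0 ≤ ‖x‖⁻¹ * ‖x‖⁻¹) hMx

-- Restricting to unit vectors makes the set of bad pairs `(t, x)` compact, so a first bad time
-- exists.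
lemma exists_first_not_posDef {G : ℝ → Matrix ι ι ℝ} {T : ℝ}
    (hG : ContinuousOn G (Icc 0 T)) (hherm : ∀ t ∈ Icc 0 T, (G t).IsHermitian)
    (hnot : ∃ t ∈ Icc 0 T, ¬(G t).PosDef) :
    ∃ t₀ ∈ Icc 0 T, ∃ x ∈ Metric.sphere (0 : ι → ℝ) 1, x ⬝ᵥ G t₀ *ᵥ x ≤ 0 ∧
      ∀ s ∈ Icc 0 T, s < t₀ → (G s).PosDef := by
  set Z := (Icc 0 T ×ˢ Metric.sphere (0 : ι → ℝ) 1) ∩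
    (fun p : ℝ × (ι → ℝ) => p.2 ⬝ᵥ G p.1 *ᵥ p.2) ⁻¹' Iic 0
  have hZ : IsCompact Z := by
    refine (isCompact_Icc.prod (isCompact_sphere 0 1)).of_isClosed_subset ?_ inter_subset_left
    refine ContinuousOn.preimage_isClosed_of_isClosed ?_
      (isClosed_Icc.prod Metric.isClosed_sphere) isClosed_Iic
    exact continuous_dotProduct_mulVec.comp_continuousOn
      ((hG.comp continuousOn_fst fun p hp => hp.1).prodMk continuousOn_snd)
  obtain ⟨t, ht, hGt⟩ := hnot
  obtain ⟨x, hx, hGx⟩ := exists_mem_sphere_dotProduct_mulVec_nonpos (hherm t ht) hGt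
  obtain ⟨⟨t₀, x₀⟩, ⟨⟨ht₀, hx₀⟩, hGx₀⟩, hmin⟩ :=
    hZ.exists_isMinOn ⟨(t, x), ⟨ht, hx⟩, hGx⟩ continuous_fst.continuousOn
  refine ⟨t₀, ht₀, x₀, hx₀, hGx₀, fun s hs hst => by_contra fun hGs => ?_⟩
  obtain ⟨y, hy, hGy⟩ := exists_mem_sphere_dotProduct_mulVec_nonpos (hherm s hs) hGs
  exact (hmin (a := (s, y)) ⟨⟨hs, hy⟩, hGy⟩).not_gt hst

lemma posSemidef_of_continuousWithinAt_of_posDef_left {G : ℝ → Matrix ι ι ℝ} {a t : ℝ}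
    {S : Set ℝ} (hat : a < t) (hS : Ioo a t ⊆ S) (hG : ContinuousWithinAt G S t)
    (hherm : (G t).IsHermitian) (hpos : ∀ s ∈ Ioo a t, (G s).PosDef) : (G t).PosSemidef := by
  refine .of_dotProduct_mulVec_nonneg hherm fun x => ?_
  have hlim : Filter.Tendsto (fun s => x ⬝ᵥ G s *ᵥ x) (𝓝[<] t) (𝓝 (x ⬝ᵥ G t *ᵥ x)) := by
    rw [← nhdsWithin_Ioo_eq_nhdsLT hat]
    exact (continuous_dotProduct_mulVec.continuousAt.comp_continuousWithinAt
      ((hG.mono hS).prodMk continuousWithinAt_const)).tendsto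
  simpa using ge_of_tendsto hlim (by
    filter_upwards [Ioo_mem_nhdsLT hat] with s hs
    simpa using (hpos s hs).posSemidef.dotProduct_mulVec_nonneg x)

theorem posDef_of_hasDerivWithinAt_pos_on_kernel {G : ℝ → Matrix ι ι ℝ} {T : ℝ}
    (hG : ContinuousOn G (Icc 0 T)) (hherm : ∀ t ∈ Icc 0 T, (G t).IsHermitian)
    (hG₀ : (G 0).PosDef)
    (hderiv : ∀ t ∈ Ioc 0 T, (G t).PosSemidef → ∀ x, x ≠ 0 → G t *ᵥ x = 0 →
      ∃ d, 0 < d ∧ HasDerivWithinAt (fun s => x ⬝ᵥ G s *ᵥ x) d (Iio t) t) :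
    ∀ t ∈ Icc 0 T, (G t).PosDef := by
  by_contra! hnot
  obtain ⟨t₀, ht₀, x, hx, hGx, hbefore⟩ := exists_first_not_posDef hG hherm hnot
  have hx0 : x ≠ 0 := ne_zero_of_mem_unit_sphere ⟨x, hx⟩
  have ht₀pos : 0 < t₀ := ht₀.1.lt_of_ne fun h => by
    subst h
    exact hGx.not_gt (by simpa using hG₀.dotProduct_mulVec_pos hx0)
  have hpsd : (G t₀).PosSemidef :=
    posSemidef_of_continuousWithinAt_of_posDef_left ht₀pos
      (Ioo_subset_Icc_self.trans (Icc_subset_Icc_right ht₀.2)) (hG t₀ ht₀) (hherm t₀ ht₀)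
      fun s hs => hbefore s ⟨hs.1.le, hs.2.le.trans ht₀.2⟩ hs.2
  have hzero : x ⬝ᵥ G t₀ *ᵥ x = 0 :=
    le_antisymm hGx (by simpa using hpsd.dotProduct_mulVec_nonneg x)
  obtain ⟨d, hd, hderiv⟩ := hderiv t₀ ⟨ht₀pos, ht₀.2⟩ hpsd x hx0
    ((hpsd.dotProduct_mulVec_zero_iff x).1 (by simpa using hzero))
  refine hd.not_ge (hderiv.nonpos_of_le_left ?_)
  filter_upwards [Ioo_mem_nhdsLT ht₀pos] with s hs
  rw [hzero]
  simpa using ((hbefore s ⟨hs.1.le, hs.2.le.trans ht₀.2⟩ hs.2).dotProduct_mulVec_pos hx0).le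

end Matrix

lemma solvesODE.continuousOn {a b : Type*} {L : Matrix a b ℝ → Matrix a b ℝ}
    {F : ℝ → Matrix a b ℝ} {T : ℝ} (hF : solvesODE L F T) : ContinuousOn F (Icc 0 T) :=
  continuousOn_pi.2 fun i => continuousOn_pi.2 fun j =>
    HasDerivAt.continuousOn fun t ht => hF t ht i j

section LyapunovLinearMap

variable {a b : Type*} [Fintype a] [Fintype b] {q : ℕ}

def lyapLinearMap (A₁ : Matrix a a ℝ) (A₂ : Matrix b b ℝ)
    (N₁ : Fin q → Matrix a a ℝ) (N₂ : Fin q → Matrix b b ℝ) (K : Matrix (Fin q) (Fin q) ℝ) :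
    Matrix a b ℝ →ₗ[ℝ] Matrix a b ℝ where
  toFun := lyapM A₁ A₂ N₁ N₂ K
  map_add' X Y := by
    simp only [lyapM, Matrix.mul_add, Matrix.add_mul, smul_add, Finset.sum_add_distrib]
    abel
  map_smul' c X := by
    simp [lyapM, Finset.smul_sum, smul_comm c]

@[simp]
lemma lyapLinearMap_apply (A₁ : Matrix a a ℝ) (A₂ : Matrix b b ℝ)
    (N₁ : Fin q → Matrix a a ℝ) (N₂ : Fin q → Matrix b b ℝ) (K : Matrix (Fin q) (Fin q) ℝ)
    (X : Matrix a b ℝ) : lyapLinearMap A₁ A₂ N₁ N₂ K X = lyapM A₁ A₂ N₁ N₂ K X :=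
  rfl

end LyapunovLinearMap

section Lyapunov

variable {ι : Type*} [Fintype ι] {q : ℕ} (A : Matrix ι ι ℝ) (N : Fin q → Matrix ι ι ℝ)
  {K : Matrix (Fin q) (Fin q) ℝ}

lemma transpose_lyapM (hK : K.IsSymm) (X : Matrix ι ι ℝ) :
    (lyapM A A N N K X)ᵀ = lyapM A A N N K Xᵀ := by
  simp only [lyapM, transpose_add, transpose_mul, transpose_transpose, transpose_sum,
    transpose_smul, Matrix.mul_assoc]
  rw [Finset.sum_comm, add_comm (A * Xᵀ)]
  simp_rw [hK.apply]

lemma transpose_eq_of_solvesODE (hK : K.IsSymm) {F : ℝ → Matrix ι ι ℝ} {T : ℝ}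
    (hF : solvesODE (lyapM A A N N K) F T) (hF₀ : (F 0)ᵀ = F 0) :
    ∀ t ∈ Icc 0 T, (F t)ᵀ = F t := by
  let L : (ι → ι → ℝ) →L[ℝ] (ι → ι → ℝ) :=
    LinearMap.toContinuousLinearMap (lyapLinearMap A A N N K)
  have hD : ∀ t ∈ Icc 0 T, HasDerivAt (fun s => F s - (F s)ᵀ) (L (F t - (F t)ᵀ)) t := by
    intro t ht
    refine hasDerivAt_pi.2 fun i => hasDerivAt_pi.2 fun j => ?_
    have hL : L (F t - (F t)ᵀ) = lyapM A A N N K (F t) - (lyapM A A N N K (F t))ᵀ := by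
      change lyapLinearMap A A N N K (F t - (F t)ᵀ) = _
      rw [map_sub, lyapLinearMap_apply, lyapLinearMap_apply, transpose_lyapM A N hK]
    rw [hL]
    exact (hF t ht i j).sub (hF t ht j i)
  intro t ht
  exact (sub_eq_zero.1 (eqOn_zero_of_hasDerivAt_linear L hD (sub_eq_zero.2 hF₀.symm) ht)).symm

lemma dotProduct_lyapM_mulVec_nonneg (hK : K.PosSemidef) {G : Matrix ι ι ℝ}
    (hG : G.PosSemidef) {x : ι → ℝ} (hx : G *ᵥ x = 0) :
    0 ≤ x ⬝ᵥ lyapM A A N N K G *ᵥ x := by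
  have hxG : x ᵥ* G = 0 := by
    rw [← mulVec_transpose, (isHermitian_iff_isSymm.1 hG.1).eq, hx]
  have hform : x ⬝ᵥ lyapM A A N N K G *ᵥ x =
      ∑ i, ∑ j, K i j * ((N i)ᵀ *ᵥ x ⬝ᵥ G *ᵥ ((N j)ᵀ *ᵥ x)) := by
    simp only [lyapM, add_mulVec, sum_mulVec, dotProduct_add, dotProduct_sum, smul_mulVec,
      dotProduct_smul, smul_eq_mul, ← mulVec_mulVec, hx, mulVec_zero, dotProduct_mulVec x G,
      hxG, zero_dotProduct, zero_add, dotProduct_mulVec x (N _), mulVec_transpose]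
  rw [hform]
  exact hK.sum_mul_dotProduct_mulVec_nonneg hG _

lemma dotProduct_lyapM_mulVec_add_pos [DecidableEq ι] (hK : K.PosSemidef) {c e : ℝ}
    {x : ι → ℝ} (hc : x ⬝ᵥ lyapM A A N N K 1 *ᵥ x < c * (x ⬝ᵥ x)) (he : 0 < e)
    {X : Matrix ι ι ℝ} (hX : (X + e • 1).PosSemidef) (hx : (X + e • 1) *ᵥ x = 0) :
    0 < x ⬝ᵥ lyapM A A N N K X *ᵥ x + c * e * (x ⬝ᵥ x) := by
  have hsplit : lyapM A A N N K X = lyapM A A N N K (X + e • 1) - e • lyapM A A N N K 1 := by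
    simp [← lyapLinearMap_apply, map_add]
  have hnonneg := dotProduct_lyapM_mulVec_nonneg A N hK hX hx
  have hlt := mul_lt_mul_of_pos_left hc he
  rw [hsplit, sub_mulVec, dotProduct_sub, smul_mulVec, dotProduct_smul, smul_eq_mul]
  nlinarith

end Lyapunov

theorem stmt_3_general {n q : ℕ} (T : ℝ)
    (A : Matrix (Fin n) (Fin n) ℝ) (N : Fin q → Matrix (Fin n) (Fin n) ℝ)
    (K : Matrix (Fin q) (Fin q) ℝ) (hK : K.PosSemidef)
    (F₀ : Matrix (Fin n) (Fin n) ℝ) (hF₀ : F₀.PosSemidef)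
    (F : ℝ → Matrix (Fin n) (Fin n) ℝ)
    (hF : solvesODE (lyapM A A N N K) F T) (hF0 : F 0 = F₀) :
    ∀ t ∈ Set.Icc (0:ℝ) T, (F t).PosSemidef := by
  have hsymm : ∀ t ∈ Icc 0 T, (F t)ᵀ = F t :=
    transpose_eq_of_solvesODE A N (isHermitian_iff_isSymm.1 hK.1) hF
      (hF0 ▸ (isHermitian_iff_isSymm.1 hF₀.1).eq)
  obtain ⟨c, hc⟩ := exists_dotProduct_mulVec_lt_mul_dotProduct (lyapM A A N N K 1)
  have hbarrier (ε : ℝ) (hε : 0 < ε) :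
      ∀ t ∈ Icc 0 T, (F t + (ε * Real.exp (c * t)) • 1).PosDef := by
    refine posDef_of_hasDerivWithinAt_pos_on_kernel (hF.continuousOn.add (by fun_prop))
      (fun t ht => by simp [isHermitian_iff_isSymm, IsSymm, hsymm t ht])
      (by simpa [hF0] using PosDef.posSemidef_add hF₀ (PosDef.one.smul hε))
      fun t ht hG x hx0 hx => ⟨_, dotProduct_lyapM_mulVec_add_pos A N hK (hc x hx0)
        (by positivity) hG hx, ?_⟩
    have hentry (i j : Fin n) : HasDerivAt (fun s => (F s + (ε * Real.exp (c * s)) • 1) i j)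
        ((lyapM A A N N K (F t) + (c * (ε * Real.exp (c * t))) • 1) i j) t := by
      have hexp : HasDerivAt (fun s => ε * Real.exp (c * s)) (c * (ε * Real.exp (c * t))) t :=
        (((hasDerivAt_id' t).const_mul c).exp.const_mul ε).congr_deriv (by ring)
      simp only [Matrix.add_apply, Matrix.smul_apply, smul_eq_mul]
      exact (hF t (Ioc_subset_Icc_self ht) i j).add (hexp.mul_const _)
    simpa [add_mulVec, smul_mulVec, mul_assoc] using
      (hasDerivAt_dotProduct_mulVec hentry x).hasDerivWithinAt
  intro t ht
  refine posSemidef_of_forall_posDef_add_smul_one (isHermitian_iff_isSymm.2 (hsymm t ht))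
    fun δ hδ => ?_
  simpa [div_mul_cancel₀ δ (Real.exp_pos (c * t)).ne'] using
    hbarrier (δ / Real.exp (c * t)) (by positivity) t ht

/-- if `K_M` is positive semidefinite and `F₀` is symmetric positive
semidefinite, then the solution of `F' = 𝓛[F]`, `F 0 = F₀` is positive semidefinite
(in particular symmetric) on `[0,T]`. -/
theorem stmt_3 {n q : ℕ} (T : ℝ) (hT : 0 < T)
    (A : Matrix (Fin n) (Fin n) ℝ) (N : Fin q → Matrix (Fin n) (Fin n) ℝ)
    (K : Matrix (Fin q) (Fin q) ℝ) (hK : K.PosSemidef)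
    (F₀ : Matrix (Fin n) (Fin n) ℝ) (hF₀ : F₀.PosSemidef)
    (F : ℝ → Matrix (Fin n) (Fin n) ℝ)
    (hF : solvesODE (lyapM A A N N K) F T) (hF0 : F 0 = F₀) :
    ∀ t ∈ Set.Icc (0:ℝ) T, (F t).PosSemidef :=
  stmt_3_general T A N K hK F₀ hF₀ F hF hF0
end

section
/- Assume the reduced matrices have projection form: Â = (WᵀV)⁻¹WᵀAV, N̂_i = (WᵀV)⁻¹WᵀN_iV, X̂₀ = (WᵀV)⁻¹WᵀX₀, Ĉ = CV, where V, W ∈ ℝ^{n×n̂} and WᵀV is invertible. Then the identities Ĉ P̂(T) − C P̃(T) = C ∫₀ᵀ (V F̂(t) − F̃(t)) dt and X̂₀ᵀ Q̂(T) − X₀ᵀ Q̃(T) = X₀ᵀ ∫₀ᵀ (W(VᵀW)⁻¹ Ĝ(t) − G̃(t)) dt hold. Consequently, condition (a), Ĉ P̂(T) = C P̃(T), holds if and only if C ∫₀ᵀ (V F̂(t) − F̃(t)) dt = 0, and condition (b), Q̂(T) X̂₀ = Q̃(T)ᵀ X₀, holds if and only if X₀ᵀ ∫₀ᵀ (W(VᵀW)⁻¹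 Ĝ(t) − G̃(t)) dt = 0. -/
open Matrix MeasureTheory Filter
open scoped Kronecker Topology

/-!
The two identities are linearity of the integral, once `Ĉ = C V` and
`X̂₀ᵀ = X₀ᵀ W (VᵀW)⁻¹` are substituted. Condition (b) is the transpose of
`X̂₀ᵀ Q̂ = X₀ᵀ Q̃`, because `Q̂` is symmetric: for symmetric `K` the transpose of a solution
of the adjoint Lyapunov equation is again a solution, so uniqueness for linear ODEs and the
symmetric initial value `ĈᵀĈ` give `Ĝ(t)ᵀ = Ĝ(t)`.
-/

section LinearODE

variable {a b : Type*} {T : ℝ}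

lemma solvesODE.intervalIntegrable {L : Matrix a b ℝ → Matrix a b ℝ} {F : ℝ → Matrix a b ℝ}
    (hF : solvesODE L F T) (hT : 0 ≤ T) (i : a) (j : b) :
    IntervalIntegrable (fun t => F t i j) volume 0 T := by
  refine ContinuousOn.intervalIntegrable fun t ht => ?_
  rw [Set.uIcc_of_le hT] at ht
  exact (hF t ht i j).continuousAt.continuousWithinAt

lemma solvesODE.transpose {L : Matrix a b ℝ → Matrix a b ℝ} {L' : Matrix b a ℝ → Matrix b a ℝ}
    (hL : ∀ X, (L X)ᵀ = L' Xᵀ) {F : ℝ → Matrix a b ℝ} (hF : solvesODE L F T) :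
    solvesODE L' (fun t => (F t)ᵀ) T := by
  intro t ht i j
  rw [← hL]
  exact hF t ht j i

-- With the entrywise sup norm, `solvesODE` is literally `HasDerivAt` via `hasDerivAt_pi`.
attribute [local instance] Matrix.normedAddCommGroup Matrix.normedSpace in
lemma solvesODE.eqOn [Fintype a] [Fintype b] {L : Matrix a b ℝ →ₗ[ℝ] Matrix a b ℝ}
    {F G : ℝ → Matrix a b ℝ}
    (hF : solvesODE L F T) (hG : solvesODE L G T) (h0 : F 0 = G 0) :
    Set.EqOn F G (Set.Icc 0 T) := by
  have hderiv : ∀ {H : ℝ → Matrix a b ℝ}, solvesODE L H T →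
      ∀ t ∈ Set.Icc 0 T, HasDerivAt H (L (H t)) t := fun hH t ht =>
    hasDerivAt_pi.2 fun i => hasDerivAt_pi.2 fun j => hH t ht i j
  set L' := LinearMap.toContinuousLinearMap L
  exact ODE_solution_unique (v := fun _ => L') (fun _ => L'.lipschitz)
    (fun t ht => (hderiv hF t ht).continuousAt.continuousWithinAt)
    (fun t ht => (hderiv hF t (Set.Ico_subset_Icc_self ht)).hasDerivWithinAt)
    (fun t ht => (hderiv hG t ht).continuousAt.continuousWithinAt)
    (fun t ht => (hderiv hG t (Set.Ico_subset_Icc_self ht)).hasDerivWithinAt) h0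

end LinearODE

section IntegralOfMatrix

variable {a b c : Type*} {T : ℝ}

lemma intM_sub {F G : ℝ → Matrix a b ℝ}
    (hF : ∀ i j, IntervalIntegrable (fun t => F t i j) volume 0 T)
    (hG : ∀ i j, IntervalIntegrable (fun t => G t i j) volume 0 T) :
    intM (fun t => F t - G t) T = intM F T - intM G T := by
  ext i j
  exact intervalIntegral.integral_sub (hF i j) (hG i j)

lemma intervalIntegrable_mul_apply [Fintype a] (M : Matrix c a ℝ) {F : ℝ → Matrix a b ℝ}
    (hF : ∀ i j, IntervalIntegrable (fun t => F t i j) volume 0 T) (i : c) (j : b) :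
    IntervalIntegrable (fun t => (M * F t) i j) volume 0 T := by
  simpa only [Matrix.mul_apply, Finset.sum_fn] using
    IntervalIntegrable.sum Finset.univ fun k _ => (hF k j).const_mul (M i k)

lemma intM_const_mul [Fintype a] (M : Matrix c a ℝ) {F : ℝ → Matrix a b ℝ}
    (hF : ∀ i j, IntervalIntegrable (fun t => F t i j) volume 0 T) :
    intM (fun t => M * F t) T = M * intM F T := by
  ext i j
  simp only [intM, Matrix.of_apply, Matrix.mul_apply]
  rw [intervalIntegral.integral_finsetSum fun k _ => (hF k j).const_mul (M i k)]
  simp only [intervalIntegral.integral_const_mul]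

lemma transpose_intM (F : ℝ → Matrix a b ℝ) :
    (intM F T)ᵀ = intM (fun t => (F t)ᵀ) T :=
  rfl

lemma intM_congr {F G : ℝ → Matrix a b ℝ} (hT : 0 ≤ T) (h : Set.EqOn F G (Set.Icc 0 T)) :
    intM F T = intM G T := by
  ext i j
  refine intervalIntegral.integral_congr fun t ht => ?_
  rw [Set.uIcc_of_le hT] at ht
  simp only [h ht]

end IntegralOfMatrix

section Lyapunov

variable {a b : Type*} [Fintype a] [Fintype b] {q : ℕ}

noncomputable def lyapAdjLinearMap (A₁ : Matrix a a ℝ) (A₂ : Matrix b b ℝ)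
    (N₁ : Fin q → Matrix a a ℝ) (N₂ : Fin q → Matrix b b ℝ) (K : Matrix (Fin q) (Fin q) ℝ) :
    Matrix a b ℝ →ₗ[ℝ] Matrix a b ℝ where
  toFun := lyapAdjM A₁ A₂ N₁ N₂ K
  map_add' X Y := by
    simp only [lyapAdjM, Matrix.mul_add, Matrix.add_mul, smul_add, Finset.sum_add_distrib]
    abel
  map_smul' r X := by
    simp only [lyapAdjM, Matrix.mul_smul, Matrix.smul_mul, smul_add, Finset.smul_sum,
      smul_comm r, RingHom.id_apply]

lemma transpose_lyapAdjM {K : Matrix (Fin q) (Fin q) ℝ} (hK : K.IsSymm) (A₁ : Matrix a a ℝ)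
    (A₂ : Matrix b b ℝ) (N₁ : Fin q → Matrix a a ℝ) (N₂ : Fin q → Matrix b b ℝ)
    (X : Matrix a b ℝ) :
    (lyapAdjM A₁ A₂ N₁ N₂ K X)ᵀ = lyapAdjM A₂ A₁ N₂ N₁ K Xᵀ := by
  simp only [lyapAdjM, Matrix.transpose_add, Matrix.transpose_sum, Matrix.transpose_smul,
    Matrix.transpose_mul, Matrix.transpose_transpose, Matrix.mul_assoc]
  rw [Finset.sum_comm (f := fun i j => K i j • _)]
  simp only [hK.apply]
  abel

lemma solvesODE.transpose_eq_of_lyapAdjM {K : Matrix (Fin q) (Fin q) ℝ} (hK : K.IsSymm)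
    {A : Matrix b b ℝ} {N : Fin q → Matrix b b ℝ} {G : ℝ → Matrix b b ℝ} {T : ℝ}
    (hG : solvesODE (lyapAdjM A A N N K) G T) (h0 : (G 0)ᵀ = G 0) :
    Set.EqOn (fun t => (G t)ᵀ) G (Set.Icc 0 T) :=
  solvesODE.eqOn (L := lyapAdjLinearMap A A N N K)
    (hG.transpose (transpose_lyapAdjM hK A A N N)) hG h0

end Lyapunov

theorem stmt_6_general {n nh m p q : ℕ} (T : ℝ) (hT : 0 < T)
    (A : Matrix (Fin n) (Fin n) ℝ) (N : Fin q → Matrix (Fin n) (Fin n) ℝ)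
    (K : Matrix (Fin q) (Fin q) ℝ) (hK : K.IsSymm)
    (X₀ : Matrix (Fin n) (Fin m) ℝ) (C : Matrix (Fin p) (Fin n) ℝ)
    (V W : Matrix (Fin n) (Fin nh) ℝ)
    (Ahat : Matrix (Fin nh) (Fin nh) ℝ) (Nhat : Fin q → Matrix (Fin nh) (Fin nh) ℝ)
    (X0hat : Matrix (Fin nh) (Fin m) ℝ) (Chat : Matrix (Fin p) (Fin nh) ℝ)
    (hX0hat : X0hat = (Wᵀ * V)⁻¹ * Wᵀ * X₀)
    (hChat : Chat = C * V)
    (Fhat : ℝ → Matrix (Fin nh) (Fin nh) ℝ)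
    (hFhat : solvesODE (lyapM Ahat Ahat Nhat Nhat K) Fhat T)
    (Ftil : ℝ → Matrix (Fin n) (Fin nh) ℝ)
    (hFtil : solvesODE (lyapM A Ahat N Nhat K) Ftil T)
    (Ghat : ℝ → Matrix (Fin nh) (Fin nh) ℝ)
    (hGhat : solvesODE (lyapAdjM Ahat Ahat Nhat Nhat K) Ghat T)
    (hGhat0 : Ghat 0 = Chatᵀ * Chat)
    (Gtil : ℝ → Matrix (Fin n) (Fin nh) ℝ)
    (hGtil : solvesODE (lyapAdjM A Ahat N Nhat K) Gtil T) :
    (Chat * intM Fhat T - C * intM Ftil T = C * intM (fun t => V * Fhat t - Ftil t) T)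
    ∧ (X0hatᵀ * intM Ghat T - X₀ᵀ * intM Gtil T =
        X₀ᵀ * intM (fun t => W * (Vᵀ * W)⁻¹ * Ghat t - Gtil t) T)
    ∧ (Chat * intM Fhat T = C * intM Ftil T ↔
        C * intM (fun t => V * Fhat t - Ftil t) T = 0)
    ∧ (intM Ghat T * X0hat = (intM Gtil T)ᵀ * X₀ ↔
        X₀ᵀ * intM (fun t => W * (Vᵀ * W)⁻¹ * Ghat t - Gtil t) T = 0) := by
  have hFhatInt := hFhat.intervalIntegrable hT.le
  have hGhatInt := hGhat.intervalIntegrable hT.le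
  have gap_a : Chat * intM Fhat T - C * intM Ftil T =
      C * intM (fun t => V * Fhat t - Ftil t) T := by
    rw [intM_sub (intervalIntegrable_mul_apply V hFhatInt) (hFtil.intervalIntegrable hT.le),
      intM_const_mul V hFhatInt, Matrix.mul_sub, ← Matrix.mul_assoc, hChat]
  have hX0hatT : X0hatᵀ = X₀ᵀ * (W * (Vᵀ * W)⁻¹) := by
    rw [hX0hat, Matrix.transpose_mul, Matrix.transpose_mul, Matrix.transpose_nonsing_inv,
      Matrix.transpose_mul, Matrix.transpose_transpose]
  have gap_b : X0hatᵀ * intM Ghat T - X₀ᵀ * intM Gtil T =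
      X₀ᵀ * intM (fun t => W * (Vᵀ * W)⁻¹ * Ghat t - Gtil t) T := by
    rw [intM_sub (intervalIntegrable_mul_apply _ hGhatInt) (hGtil.intervalIntegrable hT.le),
      intM_const_mul _ hGhatInt, Matrix.mul_sub, ← Matrix.mul_assoc, hX0hatT]
  have hQhat_symm : (intM Ghat T)ᵀ = intM Ghat T := by
    refine (transpose_intM Ghat).trans (intM_congr hT.le (hGhat.transpose_eq_of_lyapAdjM hK ?_))
    rw [hGhat0, Matrix.transpose_mul, Matrix.transpose_transpose]
  refine ⟨gap_a, gap_b, by rw [← gap_a, sub_eq_zero], ?_⟩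
  rw [← gap_b, sub_eq_zero, ← Matrix.transpose_inj, Matrix.transpose_mul, Matrix.transpose_mul,
    Matrix.transpose_transpose, hQhat_symm]

/-- eq. (3.5): for projection-form reduced matrices, the gaps in
optimality conditions (a) and (b) are the time-averaged covariance errors; in
particular (a) holds iff `C ∫₀ᵀ (V F̂ − F̃) dt = 0` and (b) holds iff
`X₀ᵀ ∫₀ᵀ (W (VᵀW)⁻¹ Ĝ − G̃) dt = 0`. -/
theorem stmt_6 {n nh m p q : ℕ} (T : ℝ) (hT : 0 < T)
    (A : Matrix (Fin n) (Fin n) ℝ) (N : Fin q → Matrix (Fin n) (Fin n) ℝ)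
    (K : Matrix (Fin q) (Fin q) ℝ) (hK : K.IsSymm)
    (X₀ : Matrix (Fin n) (Fin m) ℝ) (C : Matrix (Fin p) (Fin n) ℝ)
    (V W : Matrix (Fin n) (Fin nh) ℝ) (hWV : IsUnit (Wᵀ * V))
    (Ahat : Matrix (Fin nh) (Fin nh) ℝ) (Nhat : Fin q → Matrix (Fin nh) (Fin nh) ℝ)
    (X0hat : Matrix (Fin nh) (Fin m) ℝ) (Chat : Matrix (Fin p) (Fin nh) ℝ)
    (hAhat : Ahat = (Wᵀ * V)⁻¹ * Wᵀ * A * V)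
    (hNhat : ∀ i, Nhat i = (Wᵀ * V)⁻¹ * Wᵀ * N i * V)
    (hX0hat : X0hat = (Wᵀ * V)⁻¹ * Wᵀ * X₀)
    (hChat : Chat = C * V)
    (Fhat : ℝ → Matrix (Fin nh) (Fin nh) ℝ)
    (hFhat : solvesODE (lyapM Ahat Ahat Nhat Nhat K) Fhat T)
    (hFhat0 : Fhat 0 = X0hat * X0hatᵀ)
    (Ftil : ℝ → Matrix (Fin n) (Fin nh) ℝ)
    (hFtil : solvesODE (lyapM A Ahat N Nhat K) Ftil T)
    (hFtil0 : Ftil 0 = X₀ * X0hatᵀ)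
    (Ghat : ℝ → Matrix (Fin nh) (Fin nh) ℝ)
    (hGhat : solvesODE (lyapAdjM Ahat Ahat Nhat Nhat K) Ghat T)
    (hGhat0 : Ghat 0 = Chatᵀ * Chat)
    (Gtil : ℝ → Matrix (Fin n) (Fin nh) ℝ)
    (hGtil : solvesODE (lyapAdjM A Ahat N Nhat K) Gtil T)
    (hGtil0 : Gtil 0 = Cᵀ * Chat) :
    (Chat * intM Fhat T - C * intM Ftil T = C * intM (fun t => V * Fhat t - Ftil t) T)
    ∧ (X0hatᵀ * intM Ghat T - X₀ᵀ * intM Gtil T =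
        X₀ᵀ * intM (fun t => W * (Vᵀ * W)⁻¹ * Ghat t - Gtil t) T)
    ∧ (Chat * intM Fhat T = C * intM Ftil T ↔
        C * intM (fun t => V * Fhat t - Ftil t) T = 0)
    ∧ (intM Ghat T * X0hat = (intM Gtil T)ᵀ * X₀ ↔
        X₀ᵀ * intM (fun t => W * (Vᵀ * W)⁻¹ * Ghat t - Gtil t) T = 0) :=
  stmt_6_general T hT A N K hK X₀ C V W Ahat Nhat X0hat Chat hX0hat hChat Fhat hFhat Ftil hFtil Ghat
    hGhat hGhat0 Gtil hGtil
end

section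
/- Let S ∈ ℝ^{n̂×n̂} be invertible and set Ã = SÂS⁻¹, X̃₀ = SX̂₀, C̃ = ĈS⁻¹, Ñ_i = SN̂_iS⁻¹. Let X : [0,T] → ℝ^{n×n̂} be the unique solution of X'(t) = AX(t) + X(t)Ãᵀ + Σ_{i,j=1}^q N_i X(t) Ñ_jᵀ k_{ij}, X(0) = X₀X̃₀ᵀ, and let Y : [0,T] → ℝ^{n×n̂} be the unique solution of Y'(t) = AᵀY(t) + Y(t)Ã + Σ_{i,j=1}^q N_iᵀ Y(t) Ñ_j k_{ij}, Y(0) = CᵀC̃. Then F̃(t) = X(t)S⁻ᵀ and G̃(t) = Y(t)S for all t ∈ [0,T]. -/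
/-!
Conjugation by `S` cancels under right multiplication: `L̂(Z S⁻ᵀ) = L̃(Z) S⁻ᵀ` and
`L̂*(Z S) = L̃*(Z) S`, where `L̃` is the operator with the transformed coefficients. So `X S⁻ᵀ`
and `Y S` solve the equations of `F̃` and `G̃` with the same initial values, and solutions of a
linear ODE with a given initial value are unique (Grönwall).
-/

open Matrix MeasureTheory Filter
open scoped Kronecker Topology

-- Any norm induces the product topology in which `solvesODE` differentiates entrywise.
open scoped Matrix.Norms.Elementwise

section LinearMatrixODE

variable {a b : Type*} [Fintype b]

lemma solvesODE.hasDerivAt {L : Matrix a b ℝ → Matrix a b ℝ} {F : ℝ → Matrix a b ℝ} {T : ℝ}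
    (hF : solvesODE L F T) {t : ℝ} (ht : t ∈ Set.Icc 0 T) : HasDerivAt F (L (F t)) t :=
  hasDerivAt_pi.2 fun i => hasDerivAt_pi.2 fun j => hF t ht i j

lemma solvesODE.eqOn_of_isLinearMap [Fintype a] {L : Matrix a b ℝ → Matrix a b ℝ}
    (hL : IsLinearMap ℝ L)
    {F G : ℝ → Matrix a b ℝ} {T : ℝ} (hF : solvesODE L F T) (hG : solvesODE L G T)
    (h0 : F 0 = G 0) : Set.EqOn F G (Set.Icc 0 T) := by
  let L' := (hL.mk' L).toContinuousLinearMap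
  have hderiv {H : ℝ → Matrix a b ℝ} (hH : solvesODE L H T) :
      ∀ t ∈ Set.Ico 0 T, HasDerivWithinAt H (L' (H t)) (Set.Ici t) t := fun t ht =>
    (hH.hasDerivAt (Set.Ico_subset_Icc_self ht)).hasDerivWithinAt
  have hcont {H : ℝ → Matrix a b ℝ} (hH : solvesODE L H T) : ContinuousOn H (Set.Icc 0 T) :=
    fun t ht => (hH.hasDerivAt ht).continuousAt.continuousWithinAt
  exact ODE_solution_unique (v := fun _ => L') (fun _ => L'.lipschitz)
    (hcont hF) (hderiv hF) (hcont hG) (hderiv hG) h0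

lemma solvesODE.mul_const {L₁ L₂ : Matrix a b ℝ → Matrix a b ℝ} {M : Matrix b b ℝ}
    (h : ∀ Z, L₂ (Z * M) = L₁ Z * M) {F : ℝ → Matrix a b ℝ} {T : ℝ} (hF : solvesODE L₁ F T) :
    solvesODE L₂ (fun t => F t * M) T := by
  intro t ht i j
  rw [h, mul_apply]
  simpa only [mul_apply] using HasDerivAt.fun_sum fun k _ => (hF t ht i k).mul_const (M k j)

end LinearMatrixODE

section LyapunovOperators

variable {a b : Type*} [Fintype a] [Fintype b] {q : ℕ}
  (A₁ : Matrix a a ℝ) (A₂ : Matrix b b ℝ) (N₁ : Fin q → Matrix a a ℝ) (N₂ : Fin q → Matrix b b ℝ)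
  (K : Matrix (Fin q) (Fin q) ℝ)

lemma lyapM_isLinearMap : IsLinearMap ℝ (lyapM A₁ A₂ N₁ N₂ K) where
  map_add X Y := by
    simp only [lyapM, Matrix.mul_add, Matrix.add_mul, smul_add, Finset.sum_add_distrib]
    abel
  map_smul c X := by
    simp only [lyapM, Matrix.mul_smul, Matrix.smul_mul, smul_add, Finset.smul_sum, smul_comm c]

lemma lyapAdjM_isLinearMap : IsLinearMap ℝ (lyapAdjM A₁ A₂ N₁ N₂ K) where
  map_add X Y := by
    simp only [lyapAdjM, Matrix.mul_add, Matrix.add_mul, smul_add, Finset.sum_add_distrib]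
    abel
  map_smul c X := by
    simp only [lyapAdjM, Matrix.mul_smul, Matrix.smul_mul, smul_add, Finset.smul_sum, smul_comm c]

variable [DecidableEq b] {S : Matrix b b ℝ}

lemma lyapM_mul_inv_transpose (hS : IsUnit S) (Z : Matrix a b ℝ) :
    lyapM A₁ A₂ N₁ N₂ K (Z * (S⁻¹)ᵀ) =
      lyapM A₁ (S * A₂ * S⁻¹) N₁ (fun i => S * N₂ i * S⁻¹) K Z * (S⁻¹)ᵀ := by
  have hSS : Sᵀ * (S⁻¹)ᵀ = 1 := by
    rw [← transpose_mul, nonsing_inv_mul S ((isUnit_iff_isUnit_det S).1 hS), transpose_one]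
  simp only [lyapM, transpose_mul, Matrix.add_mul, Matrix.sum_mul, Matrix.smul_mul,
    Matrix.mul_assoc, hSS, Matrix.mul_one]

lemma lyapAdjM_mul (hS : IsUnit S) (Z : Matrix a b ℝ) :
    lyapAdjM A₁ A₂ N₁ N₂ K (Z * S) =
      lyapAdjM A₁ (S * A₂ * S⁻¹) N₁ (fun i => S * N₂ i * S⁻¹) K Z * S := by
  have hSS : S⁻¹ * S = 1 := nonsing_inv_mul S ((isUnit_iff_isUnit_det S).1 hS)
  simp only [lyapAdjM, Matrix.add_mul, Matrix.sum_mul, Matrix.smul_mul, Matrix.mul_assoc, hSS,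
    Matrix.mul_one]

end LyapunovOperators

theorem stmt_9_general {n nh m p q : ℕ} (T : ℝ)
    (A : Matrix (Fin n) (Fin n) ℝ) (N : Fin q → Matrix (Fin n) (Fin n) ℝ)
    (K : Matrix (Fin q) (Fin q) ℝ)
    (X₀ : Matrix (Fin n) (Fin m) ℝ) (C : Matrix (Fin p) (Fin n) ℝ)
    (Ahat : Matrix (Fin nh) (Fin nh) ℝ) (Nhat : Fin q → Matrix (Fin nh) (Fin nh) ℝ)
    (X0hat : Matrix (Fin nh) (Fin m) ℝ) (Chat : Matrix (Fin p) (Fin nh) ℝ)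
    (S : Matrix (Fin nh) (Fin nh) ℝ) (hS : IsUnit S)
    (X Y : ℝ → Matrix (Fin n) (Fin nh) ℝ)
    (hX : solvesODE
      (lyapM A (S * Ahat * S⁻¹) N (fun i => S * Nhat i * S⁻¹) K) X T)
    (hX0 : X 0 = X₀ * (S * X0hat)ᵀ)
    (hY : solvesODE
      (lyapAdjM A (S * Ahat * S⁻¹) N (fun i => S * Nhat i * S⁻¹) K) Y T)
    (hY0 : Y 0 = Cᵀ * (Chat * S⁻¹))
    (Ftil : ℝ → Matrix (Fin n) (Fin nh) ℝ)
    (hFtil : solvesODE (lyapM A Ahat N Nhat K) Ftil T)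
    (hFtil0 : Ftil 0 = X₀ * X0hatᵀ)
    (Gtil : ℝ → Matrix (Fin n) (Fin nh) ℝ)
    (hGtil : solvesODE (lyapAdjM A Ahat N Nhat K) Gtil T)
    (hGtil0 : Gtil 0 = Cᵀ * Chat) :
    ∀ t ∈ Set.Icc (0:ℝ) T, Ftil t = X t * (S⁻¹)ᵀ ∧ Gtil t = Y t * S := by
  have hSS : S⁻¹ * S = 1 := nonsing_inv_mul S ((isUnit_iff_isUnit_det S).1 hS)
  have hXF : solvesODE (lyapM A Ahat N Nhat K) (fun t => X t * (S⁻¹)ᵀ) T :=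
    hX.mul_const (lyapM_mul_inv_transpose A Ahat N Nhat K hS)
  have hYG : solvesODE (lyapAdjM A Ahat N Nhat K) (fun t => Y t * S) T :=
    hY.mul_const (lyapAdjM_mul A Ahat N Nhat K hS)
  have hXF0 : Ftil 0 = X 0 * (S⁻¹)ᵀ := by
    rw [hFtil0, hX0, transpose_mul, Matrix.mul_assoc, Matrix.mul_assoc, ← transpose_mul, hSS,
      transpose_one, Matrix.mul_one]
  have hYG0 : Gtil 0 = Y 0 * S := by
    rw [hGtil0, hY0, Matrix.mul_assoc, Matrix.mul_assoc, hSS, Matrix.mul_one]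
  intro t ht
  exact ⟨hFtil.eqOn_of_isLinearMap (lyapM_isLinearMap A Ahat N Nhat K) hXF hXF0 ht,
    hGtil.eqOn_of_isLinearMap (lyapAdjM_isLinearMap A Ahat N Nhat K) hYG hYG0 ht⟩

/-- the state-space-transformed Sylvester solutions `X`, `Y` recover the
mixed covariance functions: `F̃(t) = X(t) S⁻ᵀ` and `G̃(t) = Y(t) S` on `[0,T]`. -/
theorem stmt_9 {n nh m p q : ℕ} (T : ℝ) (hT : 0 < T)
    (A : Matrix (Fin n) (Fin n) ℝ) (N : Fin q → Matrix (Fin n) (Fin n) ℝ)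
    (K : Matrix (Fin q) (Fin q) ℝ) (hK : K.IsSymm)
    (X₀ : Matrix (Fin n) (Fin m) ℝ) (C : Matrix (Fin p) (Fin n) ℝ)
    (Ahat : Matrix (Fin nh) (Fin nh) ℝ) (Nhat : Fin q → Matrix (Fin nh) (Fin nh) ℝ)
    (X0hat : Matrix (Fin nh) (Fin m) ℝ) (Chat : Matrix (Fin p) (Fin nh) ℝ)
    (S : Matrix (Fin nh) (Fin nh) ℝ) (hS : IsUnit S)
    (X Y : ℝ → Matrix (Fin n) (Fin nh) ℝ)
    (hX : solvesODE
      (lyapM A (S * Ahat * S⁻¹) N (fun i => S * Nhat i * S⁻¹) K) X T)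
    (hX0 : X 0 = X₀ * (S * X0hat)ᵀ)
    (hY : solvesODE
      (lyapAdjM A (S * Ahat * S⁻¹) N (fun i => S * Nhat i * S⁻¹) K) Y T)
    (hY0 : Y 0 = Cᵀ * (Chat * S⁻¹))
    (Ftil : ℝ → Matrix (Fin n) (Fin nh) ℝ)
    (hFtil : solvesODE (lyapM A Ahat N Nhat K) Ftil T)
    (hFtil0 : Ftil 0 = X₀ * X0hatᵀ)
    (Gtil : ℝ → Matrix (Fin n) (Fin nh) ℝ)
    (hGtil : solvesODE (lyapAdjM A Ahat N Nhat K) Gtil T)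
    (hGtil0 : Gtil 0 = Cᵀ * Chat) :
    ∀ t ∈ Set.Icc (0:ℝ) T, Ftil t = X t * (S⁻¹)ᵀ ∧ Gtil t = Y t * S :=
  stmt_9_general T A N K X₀ C Ahat Nhat X0hat Chat S hS X Y hX hX0 hY hY0 Ftil hFtil hFtil0 Gtil
    hGtil hGtil0
end
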